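/- Let A be a finite-dimensional left-symmetric algebra and r ∈ A ⊗ A symmetric and nondegenerate (as a map r : A* → A). Then r satisfies the S-equation -r₁₂·r₁₃ + r₁₂·r₂₃ + [r₁₃,r₂₃] = 0 if and only if the bilinear form B(x,y) = ⟨r⁻¹(x), y⟩ on A is a 2-cocycle of A, i.e., B(x·y, z) - B(x, y·z) = B(y·x, z) - B(y, x·z) for all x,y,z ∈ A. -/

import Mathlib

/-!
Pair the S-tensor with `f ⊗ g ⊗ h` and put `x = r f`, `y = r g`, `z = r h`. Since
`B (r f) w = f w`, the pairing is `-B(x, yz) + B(y, xz) + B(z, xy) - B(z, yx)`. Because `r` is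
symmetric, `B` is symmetric too, so the pairing equals the cocycle defect
`B(xy, z) - B(x, yz) - B(yx, z) + B(y, xz)`. Since `r` is onto and the functionals `f ⊗ g ⊗ h`
separate the points of `A ⊗ A ⊗ A`, the S-equation holds exactly when every cocycle defect
vanishes.
-/

open TensorProduct

variable {F : Type*} [Field F] {A : Type*} [AddCommGroup A] [Module F A]

/-- The linear map A* → A induced by r = Σᵢ aᵢ ⊗ bᵢ ∈ A ⊗ A : r(f) = Σᵢ f(bᵢ) • aᵢ. -/
noncomputable def rOp {n : ℕ} (a b : Fin n → A) : Module.Dual F A →ₗ[F] A :=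
  ∑ i, (LinearMap.applyₗ (b i)).smulRight (a i)

section DualDistrib₃

variable {R M N P : Type*} [CommRing R] [AddCommGroup M] [Module R M] [AddCommGroup N]
  [Module R N] [AddCommGroup P] [Module R P]

noncomputable def dualDistrib₃ (f : Module.Dual R M) (g : Module.Dual R N)
    (h : Module.Dual R P) : Module.Dual R (M ⊗[R] (N ⊗[R] P)) :=
  dualDistrib R M (N ⊗[R] P) (f ⊗ₜ dualDistrib R N P (g ⊗ₜ h))

@[simp] lemma dualDistrib₃_tmul (f : Module.Dual R M) (g : Module.Dual R N)
    (h : Module.Dual R P) (x : M) (y : N) (z : P) :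
    dualDistrib₃ f g h (x ⊗ₜ (y ⊗ₜ z)) = f x * (g y * h z) := by
  simp [dualDistrib₃]

lemma eq_zero_of_forall_dualDistrib₃ [Module.Free R M] [Module.Free R N] [Module.Free R P]
    (t : M ⊗[R] (N ⊗[R] P)) (H : ∀ f g h, dualDistrib₃ f g h t = 0) : t = 0 := by
  let bM := Module.Free.chooseBasis R M
  let bN := Module.Free.chooseBasis R N
  let bP := Module.Free.chooseBasis R P
  let bT := bM.tensorProduct (bN.tensorProduct bP)
  have coord_eq : ∀ i j k, Finsupp.lapply (i, j, k) ∘ₗ bT.repr.toLinearMap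
      = dualDistrib₃ (bM.coord i) (bN.coord j) (bP.coord k) := by
    intro i j k
    ext x y z
    simp only [AlgebraTensorModule.curry_apply, LinearMap.restrictScalars_self, curry_apply,
      LinearMap.coe_comp, LinearEquiv.coe_coe, Function.comp_apply, Finsupp.lapply_apply,
      Module.Basis.tensorProduct_repr_tmul_apply, smul_eq_mul, dualDistrib₃_tmul,
      Module.Basis.coord_apply, bT]
    ring
  refine bT.repr.map_eq_zero_iff.mp (Finsupp.ext fun ⟨i, j, k⟩ => ?_)
  simpa using (LinearMap.congr_fun (coord_eq i j k) t).trans (H _ _ _)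

end DualDistrib₃

lemma rOp_apply {n : ℕ} (a b : Fin n → A) (f : Module.Dual F A) :
    rOp a b f = ∑ i, f (b i) • a i := by
  simp [rOp]

lemma rOp_swap_of_symm {n : ℕ} {a b : Fin n → A}
    (hsym : ∑ i, a i ⊗ₜ[F] b i = ∑ i, b i ⊗ₜ[F] a i) : rOp (F := F) b a = rOp a b := by
  ext f
  have := congrArg (TensorProduct.lift ((LinearMap.lsmul F A ∘ₗ f).flip)) hsym
  simpa [rOp_apply] using this.symm

lemma apply_rOp_comm {n : ℕ} {a b : Fin n → A}
    (hsym : ∑ i, a i ⊗ₜ[F] b i = ∑ i, b i ⊗ₜ[F] a i) (f g : Module.Dual F A) :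
    f (rOp a b g) = g (rOp a b f) := by
  rw [rOp_apply, ← rOp_swap_of_symm hsym, rOp_apply]
  simp [mul_comm]

lemma apply_mul_rOp_rOp (mul : A →ₗ[F] A →ₗ[F] A) {n m : ℕ} (u v : Fin n → A)
    (u' v' : Fin m → A) (φ ψ χ : Module.Dual F A) :
    φ (mul (rOp u v ψ) (rOp u' v' χ))
      = ∑ i, ∑ j, ψ (v i) * χ (v' j) * φ (mul (u i) (u' j)) := by
  simp only [rOp_apply, map_sum, map_smul, LinearMap.sum_apply, LinearMap.smul_apply,
    smul_eq_mul, Finset.mul_sum, mul_assoc]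
  exact Finset.sum_comm.trans (by simp only [mul_left_comm])

lemma form_comm_of_rOp_inverse {n : ℕ} {a b : Fin n → A}
    (hsym : ∑ i, a i ⊗ₜ[F] b i = ∑ i, b i ⊗ₜ[F] a i)
    (hsurj : Function.Surjective (rOp (F := F) a b)) {B : A → A → F}
    (hB : ∀ (f : Module.Dual F A) (y : A), B (rOp a b f) y = f y) (x y : A) :
    B x y = B y x := by
  obtain ⟨f, rfl⟩ := hsurj x
  obtain ⟨g, rfl⟩ := hsurj y
  rw [hB, hB, apply_rOp_comm hsym]

/-- `-r₁₂·r₁₃ + r₁₂·r₂₃ + [r₁₃, r₂₃]` for `r = Σᵢ aᵢ ⊗ bᵢ`. -/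
noncomputable def sTensor (mul : A →ₗ[F] A →ₗ[F] A) {n : ℕ} (a b : Fin n → A) :
    A ⊗[F] (A ⊗[F] A) :=
  -(∑ i, ∑ j, (mul (a i) (a j)) ⊗ₜ[F] ((b i) ⊗ₜ[F] (b j)))
    + ∑ i, ∑ j, (a i) ⊗ₜ[F] ((mul (b i) (a j)) ⊗ₜ[F] (b j))
    + ∑ i, ∑ j, (a i) ⊗ₜ[F] ((a j) ⊗ₜ[F] (mul (b i) (b j) - mul (b j) (b i)))

lemma dualDistrib₃_sTensor (mul : A →ₗ[F] A →ₗ[F] A) {n : ℕ} (a b : Fin n → A)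
    (f g h : Module.Dual F A) :
    dualDistrib₃ f g h (sTensor mul a b)
      = -f (mul (rOp a b g) (rOp a b h)) + g (mul (rOp b a f) (rOp a b h))
        + (h (mul (rOp b a f) (rOp b a g)) - h (mul (rOp b a g) (rOp b a f))) := by
  simp only [apply_mul_rOp_rOp]
  rw [Finset.sum_comm (f := fun i j => g (a i) * f (a j) * h (mul (b i) (b j)))]
  simp only [sTensor, map_add, map_neg, map_sum, map_sub, dualDistrib₃_tmul,
    ← Finset.sum_sub_distrib]
  refine congrArg₂ (· + ·) (congrArg₂ (· + ·) (congrArg Neg.neg ?_) ?_) ?_ <;>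
    exact Finset.sum_congr rfl fun i _ => Finset.sum_congr rfl fun j _ => by ring

lemma dualDistrib₃_sTensor_eq_cocycle (mul : A →ₗ[F] A →ₗ[F] A) {n : ℕ}
    {a b : Fin n → A}
    (hsym : ∑ i, a i ⊗ₜ[F] b i = ∑ i, b i ⊗ₜ[F] a i)
    (hsurj : Function.Surjective (rOp (F := F) a b)) {B : A → A → F}
    (hB : ∀ (f : Module.Dual F A) (y : A), B (rOp a b f) y = f y) (f g h : Module.Dual F A) :
    dualDistrib₃ f g h (sTensor mul a b)
      = (B (mul (rOp a b f) (rOp a b g)) (rOp a b h)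
          - B (rOp a b f) (mul (rOp a b g) (rOp a b h)))
        - (B (mul (rOp a b g) (rOp a b f)) (rOp a b h)
          - B (rOp a b g) (mul (rOp a b f) (rOp a b h))) := by
  have hBsymm := form_comm_of_rOp_inverse hsym hsurj hB
  rw [dualDistrib₃_sTensor, rOp_swap_of_symm hsym, ← hB f, ← hB g, ← hB h, ← hB h,
    hBsymm (rOp a b h), hBsymm (rOp a b h)]
  ring

theorem S_equation_iff_two_cocycle
    (mul : A →ₗ[F] A →ₗ[F] A)
    (n : ℕ) (a b : Fin n → A)
    (hsym : ∑ i, a i ⊗ₜ[F] b i = ∑ i, b i ⊗ₜ[F] a i)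
    (hnd : Function.Bijective (rOp (F := F) a b))
    (B : A → A → F)
    (hB : ∀ (f : Module.Dual F A) (y : A), B (rOp a b f) y = f y) :
    (-(∑ i, ∑ j, (mul (a i) (a j)) ⊗ₜ[F] ((b i) ⊗ₜ[F] (b j)))
      + ∑ i, ∑ j, (a i) ⊗ₜ[F] ((mul (b i) (a j)) ⊗ₜ[F] (b j))
      + ∑ i, ∑ j, (a i) ⊗ₜ[F] ((a j) ⊗ₜ[F] (mul (b i) (b j) - mul (b j) (b i)))
      = 0)
    ↔ (∀ x y z : A,
      B (mul x y) z - B x (mul y z) = B (mul y x) z - B y (mul x z)) := by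
  change sTensor mul a b = 0 ↔ _
  calc sTensor mul a b = 0 ↔ ∀ f g h, dualDistrib₃ f g h (sTensor mul a b) = 0 :=
        ⟨fun hS _ _ _ => by rw [hS, map_zero], eq_zero_of_forall_dualDistrib₃ _⟩
    _ ↔ ∀ x y z : A, (B (mul x y) z - B x (mul y z)) - (B (mul y x) z - B y (mul x z)) = 0 := by
        simp only [dualDistrib₃_sTensor_eq_cocycle mul hsym hnd.2 hB]
        exact Iff.symm hnd.2.forall₃
    _ ↔ _ := by simp only [sub_eq_zero]
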